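/- With notation as in the alternating-sum lemma, for every non-crossing perfect matching a ∈ B^n, the sum over all arcs e ∈ a of the classes [e] in M/N equals [(1,2)] + [(3,4)] + ... + [(2n-1, 2n)], independent of a. -/

import Mathlib

/-!
Every non-crossing matching `f` other than `{1, 2}, {3, 4}, …` is obtained by a move from a
matching `g` of smaller potential `∑ max (f m) m`: if `p` is the leftmost point starting a long
arc `{p, q}`, then `p` is odd (everything to its left is matched by short arcs) and `g` replaces
`{p, q} ⊃ {p + 1, r}` by `{p, p + 1}, {r, q}`. Along a move, Type II relations identify the
classes of the common arcs and a Type I relation identifies the two changed pairs, so the arc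
sum does not change. Since these moves start at odd points, they never touch an arc
`{u, u + 1}` with `u` odd, so its class is the same in every matching containing it.
-/

def IsMatching (n : ℕ) (f : ℕ → ℕ) : Prop :=
  (∀ m, 1 ≤ m → m ≤ 2 * n → (1 ≤ f m ∧ f m ≤ 2 * n ∧ f (f m) = m ∧ f m ≠ m)) ∧
  (∀ m, (m < 1 ∨ 2 * n < m) → f m = m)

def NonCrossing (f : ℕ → ℕ) : Prop :=
  ¬ ∃ i j k l : ℕ, i < j ∧ j < k ∧ k < l ∧ f i = k ∧ f j = l

def MoveAt (a b : ℕ → ℕ) (i j k l : ℕ) : Prop :=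
  i < j ∧ j < k ∧ k < l ∧
  a i = j ∧ a j = i ∧ a k = l ∧ a l = k ∧
  b i = l ∧ b l = i ∧ b j = k ∧ b k = j ∧
  ∀ m, m ∉ ({i, j, k, l} : Set ℕ) → b m = a m

def Move (a b : ℕ → ℕ) : Prop := ∃ i j k l, MoveAt a b i j k l

/-- A non-crossing matching together with a distinguished (undotted) arc,
recorded by its two endpoints in increasing order. -/
def Idx (n : ℕ) : Type :=
  {q : (ℕ → ℕ) × ℕ × ℕ //
    IsMatching n q.1 ∧ NonCrossing q.1 ∧ q.2.1 < q.2.2 ∧ q.1 q.2.1 = q.2.2}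

/-- The free `ℤ`-module on pairs (matching, distinguished arc). -/
abbrev M (n : ℕ) := Idx n →₀ ℤ

/-- Generators of the submodule `N`: Type II elements `(a,e) - (b,e)` for a nesting
move `a → b` fixing the distinguished arc `e`, and Type I elements
`(a,{i,j}) + (a,{k,l}) - (b,{i,l}) - (b,{j,k})` for a move via `{i,j},{k,l} ↦ {i,l},{j,k}`. -/
def NGen (n : ℕ) : Set (M n) :=
  {x | (∃ p q : Idx n, Move p.1.1 q.1.1 ∧ p.1.2 = q.1.2 ∧
          x = Finsupp.single p 1 - Finsupp.single q 1) ∨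
       (∃ p₁ p₂ p₃ p₄ : Idx n, ∃ i j k l : ℕ,
          MoveAt p₁.1.1 p₃.1.1 i j k l ∧
          p₁.1.1 = p₂.1.1 ∧ p₃.1.1 = p₄.1.1 ∧
          p₁.1.2 = (i, j) ∧ p₂.1.2 = (k, l) ∧ p₃.1.2 = (i, l) ∧ p₄.1.2 = (j, k) ∧
          x = Finsupp.single p₁ 1 + Finsupp.single p₂ 1
              - Finsupp.single p₃ 1 - Finsupp.single p₄ 1)}

noncomputable def NSub (n : ℕ) : Submodule ℤ (M n) := Submodule.span ℤ (NGen n)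

open Finset

section Matching

variable {n : ℕ} {f : ℕ → ℕ}

theorem IsMatching.involutive (hf : IsMatching n f) : Function.Involutive f := by
  intro m
  by_cases hm : 1 ≤ m ∧ m ≤ 2 * n
  · exact (hf.1 m hm.1 hm.2).2.2.1
  · rw [hf.2 m (by omega), hf.2 m (by omega)]

theorem IsMatching.mem_Icc_of_apply_ne (hf : IsMatching n f) {m : ℕ} (h : f m ≠ m) :
    1 ≤ m ∧ m ≤ 2 * n := by
  by_contra hm
  exact h (hf.2 m (by omega))

theorem NonCrossing.lt_apply_lt (hnc : NonCrossing f) (hf : IsMatching n f) {p m : ℕ}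
    (hpm : p < m) (hmq : m < f p) : p < f m ∧ f m < f p := by
  have hinv := hf.involutive
  have hp := hf.mem_Icc_of_apply_ne (m := p) (by omega)
  have hq := (hf.1 p hp.1 hp.2).2.1
  have hfm := (hf.1 m (by omega) (by omega)).2.2.2
  constructor
  · by_contra h
    have hmp : f m ≠ p := fun h' => by rw [← h', hinv m] at hmq; omega
    exact hnc ⟨f m, p, m, f p, by omega, hpm, hmq, hinv m, rfl⟩
  · by_contra h
    have hmq' : f m ≠ f p := fun h' => by have := hinv.injective h'; omega
    exact hnc ⟨p, m, f p, f m, hpm, hmq, by omega, rfl, rfl⟩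

end Matching

def unnest (f : ℕ → ℕ) (i j k l : ℕ) : ℕ → ℕ := fun m =>
  if m = i then j else if m = j then i else if m = k then l else if m = l then k else f m

section Unnest

variable {n : ℕ} {f : ℕ → ℕ} {i j k l : ℕ}

theorem unnest_apply_of_ne {m : ℕ} (hi : m ≠ i) (hj : m ≠ j) (hk : m ≠ k) (hl : m ≠ l) :
    unnest f i j k l m = f m := by
  simp [unnest, hi, hj, hk, hl]

theorem IsMatching.moveAt_unnest (hf : IsMatching n f) (hij : i < j) (hjk : j < k) (hkl : k < l)
    (hfi : f i = l) (hfj : f j = k) : MoveAt (unnest f i j k l) f i j k l := by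
  have hinv := hf.involutive
  refine ⟨hij, hjk, hkl, ?_, ?_, ?_, ?_, hfi, by rw [← hfi, hinv], hfj, by rw [← hfj, hinv],
    fun m hm => ?_⟩
  · simp [unnest]
  · simp [unnest, hij.ne']
  · simp [unnest, (hij.trans hjk).ne', hjk.ne']
  · simp [unnest, (hij.trans (hjk.trans hkl)).ne', (hjk.trans hkl).ne', hkl.ne']
  · simp only [Set.mem_insert_iff, Set.mem_singleton_iff, not_or] at hm
    exact (unnest_apply_of_ne hm.1 hm.2.1 hm.2.2.1 hm.2.2.2).symm

theorem IsMatching.unnest (hf : IsMatching n f) (hij : i < j) (hjk : j < k) (hkl : k < l)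
    (hfi : f i = l) (hfj : f j = k) : IsMatching n (unnest f i j k l) := by
  obtain ⟨-, -, -, hgi, hgj, hgk, hgl, -, hfl, -, hfk, -⟩ :=
    hf.moveAt_unnest hij hjk hkl hfi hfj
  have hinv := hf.involutive
  have hi := hf.mem_Icc_of_apply_ne (m := i) (by omega)
  have hl : l ≤ 2 * n := hfi ▸ (hf.1 i hi.1 hi.2).2.1
  refine ⟨fun m h1 h2 => ?_, fun m hm => ?_⟩
  · by_cases hm : m = i ∨ m = j ∨ m = k ∨ m = l
    · rcases hm with rfl | rfl | rfl | rfl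
      · rw [hgi, hgj]; omega
      · rw [hgj, hgi]; omega
      · rw [hgk, hgl]; omega
      · rw [hgl, hgk]; omega
    simp only [not_or] at hm
    obtain ⟨hmi, hmj, hmk, hml⟩ := hm
    have hfm : ∀ x, x = i ∨ x = j ∨ x = k ∨ x = l → f m ≠ x := by
      rintro x (rfl | rfl | rfl | rfl) <;> rw [Ne, hinv.eq_iff] <;> omega
    rw [unnest_apply_of_ne hmi hmj hmk hml,
      unnest_apply_of_ne (hfm i (by simp)) (hfm j (by simp)) (hfm k (by simp)) (hfm l (by simp))]
    exact hf.1 m h1 h2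
  · rw [unnest_apply_of_ne (by omega) (by omega) (by omega) (by omega)]
    exact hf.2 m hm

/-- The new arc `{i, i + 1}` encloses no point, so a crossing would have to involve the new
arc `{k, l}`. -/
theorem NonCrossing.unnest (hnc : NonCrossing f) (hf : IsMatching n f) (hik : i + 1 < k)
    (hkl : k < l) (hfi : f i = l) (hfj : f (i + 1) = k) :
    NonCrossing (unnest f i (i + 1) k l) := by
  obtain ⟨-, -, -, hgi, hgj, hgk, hgl, -⟩ := hf.moveAt_unnest (by omega) hik hkl hfi hfj
  rintro ⟨x, y, z, w, hxy, hyz, hzw, hgx, hgy⟩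
  by_cases hx : x = i ∨ x = i + 1 ∨ x = k ∨ x = l
  · rcases hx with hx | hx | hx | hx <;> subst x
    · omega
    · omega
    · rw [hgk] at hgx
      subst z
      rw [unnest_apply_of_ne (by omega) (by omega) (by omega) (by omega)] at hgy
      exact hnc ⟨i, y, l, w, by omega, hyz, hzw, hfi, hgy⟩
    · omega
  simp only [not_or] at hx
  rw [unnest_apply_of_ne hx.1 hx.2.1 hx.2.2.1 hx.2.2.2] at hgx
  by_cases hy : y = i ∨ y = i + 1 ∨ y = k ∨ y = l
  · rcases hy with hy | hy | hy | hy <;> subst y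
    · omega
    · omega
    · rw [hgk] at hgy
      subst w
      rcases lt_or_gt_of_ne hx.1 with hxi | hxi
      · exact hnc ⟨x, i, z, l, hxi, by omega, hzw, hgx, hfi⟩
      · exact hnc ⟨i + 1, x, k, z, by omega, hxy, hyz, hfj, hgx⟩
    · omega
  simp only [not_or] at hy
  rw [unnest_apply_of_ne hy.1 hy.2.1 hy.2.2.1 hy.2.2.2] at hgy
  exact hnc ⟨x, y, z, w, hxy, hyz, hzw, hgx, hgy⟩

end Unnest

def potential (n : ℕ) (f : ℕ → ℕ) : ℕ := ∑ m ∈ Icc 1 (2 * n), max (f m) m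

section Move

variable {n : ℕ} {g f : ℕ → ℕ} {i j k l : ℕ}

theorem MoveAt.apply_eq_of_ne (h : MoveAt g f i j k l) {m : ℕ} (hi : m ≠ i) (hj : m ≠ j)
    (hk : m ≠ k) (hl : m ≠ l) : f m = g m :=
  h.2.2.2.2.2.2.2.2.2.2.2 m (by simp [hi, hj, hk, hl])

theorem MoveAt.sum_add_eq (h : MoveAt g f i j k l) (hf : IsMatching n f) {β : Type*}
    [AddCommMonoid β] {F G : ℕ → β}
    (hFG : ∀ m, m ≠ i → m ≠ j → m ≠ k → m ≠ l → F m = G m) :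
    (∑ m ∈ Icc 1 (2 * n), F m) + (G i + G j + G k + G l) =
      (∑ m ∈ Icc 1 (2 * n), G m) + (F i + F j + F k + F l) := by
  obtain ⟨hij, hjk, hkl, -, -, -, -, hfi, -⟩ := h
  have hi := hf.mem_Icc_of_apply_ne (m := i) (by omega)
  have hl : l ≤ 2 * n := hfi ▸ (hf.1 i hi.1 hi.2).2.1
  have hsub : ({i, j, k, l} : Finset ℕ) ⊆ Icc 1 (2 * n) := by
    intro m hm
    simp only [mem_insert, mem_singleton] at hm
    rw [mem_Icc]
    omega
  have hquad (H : ℕ → β) :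
      ∑ m ∈ ({i, j, k, l} : Finset ℕ), H m = H i + H j + H k + H l := by
    rw [sum_insert (by simp; omega), sum_insert (by simp; omega), sum_insert (by simp; omega),
      sum_singleton, add_assoc, add_assoc]
  rw [← sum_sdiff hsub (f := F), ← sum_sdiff hsub (f := G), hquad, hquad,
    sum_congr rfl fun m hm => ?_]
  · abel
  · simp only [mem_sdiff, mem_insert, mem_singleton, not_or] at hm
    exact hFG m hm.2.1 hm.2.2.1 hm.2.2.2.1 hm.2.2.2.2

theorem MoveAt.potential_lt (h : MoveAt g f i j k l) (hf : IsMatching n f) :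
    potential n g < potential n f := by
  have key := h.sum_add_eq hf (F := fun m => max (g m) m) (G := fun m => max (f m) m)
    fun m hi hj hk hl => by rw [h.apply_eq_of_ne hi hj hk hl]
  obtain ⟨hij, hjk, hkl, hgi, hgj, hgk, hgl, hfi, hfl, hfj, hfk, -⟩ := h
  simp only [hgi, hgj, hgk, hgl, hfi, hfl, hfj, hfk] at key
  unfold potential
  omega

end Move

/-- The matching `{1, 2}, {3, 4}, …, {2n - 1, 2n}`. -/
def baseMatching (n : ℕ) : ℕ → ℕ := fun m =>
  if 1 ≤ m ∧ m ≤ 2 * n then (if m % 2 = 1 then m + 1 else m - 1) else m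

section Base

variable {n : ℕ} {f : ℕ → ℕ}

theorem IsMatching.apply_eq_add_one_of_odd (hf : IsMatching n f) {p : ℕ} (hp : p ≤ 2 * n + 1)
    (hshort : ∀ y, 1 ≤ y → y < p → f y ≤ y + 1) :
    ∀ x, 1 ≤ x → x < p → x % 2 = 1 → f x = x + 1 := by
  intro x
  induction x using Nat.strong_induction_on with
  | _ x ih =>
  intro hx1 hxp hodd
  obtain ⟨hfx1, -, hffx, hfx⟩ := hf.1 x hx1 (by omega)
  have hxs := hshort x hx1 hxp
  by_contra hne
  have hfxs := hshort (f x) hfx1 (by omega)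
  rw [hffx] at hfxs
  -- `f x = x - 1`, and the odd point `x - 2` is matched to `x - 1` as well
  have hprev := ih (x - 2) (by omega) (by omega) (by omega) (by omega)
  have h₁ : f (x - 1) = x := by rw [show x - 1 = f x by omega, hffx]
  have h₂ : f (x - 1) = x - 2 := by rw [show x - 1 = f (x - 2) by omega, hf.involutive]
  omega

theorem IsMatching.eq_baseMatching (hf : IsMatching n f)
    (hshort : ∀ y, 1 ≤ y → y ≤ 2 * n → f y ≤ y + 1) : f = baseMatching n := by
  have hodd := hf.apply_eq_add_one_of_odd le_rfl fun y h1 h2 => hshort y h1 (by omega)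
  funext m
  unfold baseMatching
  split_ifs with hm hpar
  · exact hodd m hm.1 (by omega) hpar
  · have hprev := hodd (m - 1) (by omega) (by omega) (by omega)
    have hinv := hf.involutive (m - 1)
    rwa [hprev, show m - 1 + 1 = m by omega] at hinv
  · exact hf.2 m (by omega)

theorem IsMatching.exists_moveAt_of_ne_baseMatching (hf : IsMatching n f) (hnc : NonCrossing f)
    (hne : f ≠ baseMatching n) :
    ∃ g i k l, IsMatching n g ∧ NonCrossing g ∧ MoveAt g f i (i + 1) k l ∧ i % 2 = 1 := by
  have hlong : ∃ p, 1 ≤ p ∧ p ≤ 2 * n ∧ p + 1 < f p := by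
    by_contra! h
    exact hne (hf.eq_baseMatching h)
  obtain ⟨hp1, hp2, hpq⟩ := Nat.find_spec hlong
  set p := Nat.find hlong
  have hshort (y : ℕ) (hy1 : 1 ≤ y) (hyp : y < p) : f y ≤ y + 1 := by
    have := Nat.find_min hlong hyp
    omega
  have hodd : p % 2 = 1 := by
    by_contra hev
    have hprev := hf.apply_eq_add_one_of_odd (by omega) hshort (p - 1) (by omega) (by omega)
      (by omega)
    have hinv := hf.involutive (p - 1)
    rw [hprev, show p - 1 + 1 = p by omega] at hinv
    omega
  have hq : f p ≤ 2 * n := (hf.1 p hp1 hp2).2.1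
  obtain ⟨hr1, hr2⟩ := hnc.lt_apply_lt hf (m := p + 1) (by omega) hpq
  have hr : p + 1 < f (p + 1) := by
    have := (hf.1 (p + 1) (by omega) (by omega)).2.2.2
    omega
  exact ⟨_, p, f (p + 1), f p, hf.unnest (by omega) hr hr2 rfl rfl,
    hnc.unnest hf hr hr2 rfl rfl, hf.moveAt_unnest (by omega) hr hr2 rfl rfl, hodd⟩

theorem NonCrossing.induction_on_moveAt {P : (ℕ → ℕ) → Prop} (base : P (baseMatching n))
    (step : ∀ g f i k l, IsMatching n g → NonCrossing g → IsMatching n f → NonCrossing f →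
      MoveAt g f i (i + 1) k l → i % 2 = 1 → P g → P f)
    (hnc : NonCrossing f) (hf : IsMatching n f) : P f := by
  induction hN : potential n f using Nat.strong_induction_on generalizing f with
  | _ N ih =>
  by_cases hbase : f = baseMatching n
  · exact hbase ▸ base
  obtain ⟨g, i, k, l, hg, hgnc, hmove, hodd⟩ := hf.exists_moveAt_of_ne_baseMatching hnc hbase
  exact step g f i k l hg hgnc hf hnc hmove hodd
    (ih _ (hN ▸ hmove.potential_lt hf) hgnc hg rfl)

end Base

/-- The class in `M/N` of the arc of `f` starting at `x`; it is `0` when `x` is not the left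
end of an arc of a non-crossing matching, so that arc sums may run over all points. -/
noncomputable def arcClass (n : ℕ) (f : ℕ → ℕ) (x : ℕ) : M n ⧸ NSub n :=
  open Classical in
  if h : IsMatching n f ∧ NonCrossing f ∧ x < f x then
    Submodule.Quotient.mk (Finsupp.single (⟨(f, x, f x), h.1, h.2.1, h.2.2, rfl⟩ : Idx n) 1)
  else 0

noncomputable def arcSum (n : ℕ) (f : ℕ → ℕ) : M n ⧸ NSub n :=
  ∑ m ∈ Icc 1 (2 * n), arcClass n f m

section Quotient

variable {n : ℕ} {g f : ℕ → ℕ}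

theorem arcClass_eq_mk (hf : IsMatching n f) (hnc : NonCrossing f) {x y : ℕ} (hxy : x < y)
    (hfx : f x = y) :
    arcClass n f x = Submodule.Quotient.mk (p := NSub n)
      (Finsupp.single (⟨(f, x, y), hf, hnc, hxy, hfx⟩ : Idx n) 1) := by
  subst hfx
  exact dif_pos ⟨hf, hnc, hxy⟩

theorem arcClass_eq_zero {x : ℕ} (h : ¬ x < f x) : arcClass n f x = 0 :=
  dif_neg fun h' => h h'.2.2

theorem arcClass_idx (P : Idx n) :
    arcClass n P.1.1 P.1.2.1 = Submodule.Quotient.mk (p := NSub n) (Finsupp.single P 1) := by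
  obtain ⟨⟨f, x, y⟩, hf, hnc, hxy, hfx⟩ := P
  exact arcClass_eq_mk hf hnc hxy hfx

theorem arcClass_eq_of_move (hg : IsMatching n g) (hgnc : NonCrossing g) (hf : IsMatching n f)
    (hfnc : NonCrossing f) (hmove : Move g f) {x : ℕ} (hx : g x = f x) :
    arcClass n g x = arcClass n f x := by
  by_cases hlt : x < g x
  · rw [arcClass_eq_mk hg hgnc hlt rfl, arcClass_eq_mk hf hfnc hlt hx.symm,
      Submodule.Quotient.eq]
    refine Submodule.subset_span (Or.inl ⟨_, _, hmove, ?_, rfl⟩)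
    rfl
  · rw [arcClass_eq_zero hlt, arcClass_eq_zero (hx ▸ hlt)]

theorem MoveAt.arcClass_add_arcClass (hg : IsMatching n g) (hgnc : NonCrossing g)
    (hf : IsMatching n f) (hfnc : NonCrossing f) {i j k l : ℕ} (hmove : MoveAt g f i j k l) :
    arcClass n g i + arcClass n g k = arcClass n f i + arcClass n f j := by
  have ⟨hij, hjk, hkl, hgi, _, hgk, _, hfi, _, hfj, _⟩ := hmove
  rw [arcClass_eq_mk hg hgnc hij hgi, arcClass_eq_mk hg hgnc hkl hgk,
    arcClass_eq_mk hf hfnc (hij.trans (hjk.trans hkl)) hfi, arcClass_eq_mk hf hfnc hjk hfj,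
    ← Submodule.Quotient.mk_add, ← Submodule.Quotient.mk_add, Submodule.Quotient.eq,
    ← sub_sub]
  refine Submodule.subset_span
    (Or.inr ⟨_, _, _, _, i, j, k, l, hmove, ?_, ?_, ?_, ?_, ?_, ?_, rfl⟩) <;> rfl

theorem MoveAt.arcSum_eq (hg : IsMatching n g) (hgnc : NonCrossing g) (hf : IsMatching n f)
    (hfnc : NonCrossing f) {i j k l : ℕ} (hmove : MoveAt g f i j k l) :
    arcSum n g = arcSum n f := by
  have key := hmove.sum_add_eq hf (F := arcClass n g) (G := arcClass n f)
    fun m hi hj hk hl => arcClass_eq_of_move hg hgnc hf hfnc ⟨i, j, k, l, hmove⟩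
      (hmove.apply_eq_of_ne hi hj hk hl).symm
  have htypeI := hmove.arcClass_add_arcClass hg hgnc hf hfnc
  obtain ⟨hij, hjk, hkl, -, hgj, -, hgl, -, hfl, -, hfk, -⟩ := hmove
  rw [arcClass_eq_zero (f := g) (x := j) (by omega),
    arcClass_eq_zero (f := g) (x := l) (by omega),
    arcClass_eq_zero (f := f) (x := k) (by omega), arcClass_eq_zero (f := f) (x := l) (by omega),
    add_zero, add_zero, add_zero, add_zero, htypeI] at key
  exact add_right_cancel key

end Quotient

section Invariance

variable {n : ℕ} {f : ℕ → ℕ}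

theorem arcSum_eq_arcSum_baseMatching (hf : IsMatching n f) (hnc : NonCrossing f) :
    arcSum n f = arcSum n (baseMatching n) :=
  hnc.induction_on_moveAt (P := fun f => arcSum n f = arcSum n (baseMatching n)) rfl
    (fun _ _ _ _ _ hg hgnc hf hfnc hmove _ ih => (hmove.arcSum_eq hg hgnc hf hfnc).symm.trans ih)
    hf

theorem arcClass_eq_arcClass_baseMatching (hf : IsMatching n f) (hnc : NonCrossing f) {u : ℕ}
    (hu : u % 2 = 1) (hfu : f u = u + 1) :
    arcClass n f u = arcClass n (baseMatching n) u := by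
  refine hnc.induction_on_moveAt
    (P := fun f => f u = u + 1 → arcClass n f u = arcClass n (baseMatching n) u)
    (fun _ => rfl) ?_ hf hfu
  intro g f i k l hg hgnc hf hfnc hmove hi ih hfu
  have ⟨_, hik, hkl, _, _, _, _, hfi, hfl, _, hfk, _⟩ := hmove
  have hgu : f u = g u :=
    hmove.apply_eq_of_ne (by rintro rfl; omega) (by omega) (by rintro rfl; omega)
      (by rintro rfl; omega)
  rw [← arcClass_eq_of_move hg hgnc hf hfnc ⟨_, _, _, _, hmove⟩ hgu.symm]
  exact ih (hgu ▸ hfu)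

theorem sum_Icc_one_two_mul {β : Type*} [AddCommMonoid β] (F : ℕ → β) (N : ℕ) :
    ∑ m ∈ Icc 1 (2 * N), F m = ∑ t ∈ range N, (F (2 * t + 1) + F (2 * t + 2)) := by
  induction N with
  | zero => simp
  | succ N ih =>
    rw [show 2 * (N + 1) = 2 * N + 1 + 1 by ring, sum_Icc_succ_top (by omega),
      sum_Icc_succ_top (by omega), ih, sum_range_succ, add_assoc]

theorem arcSum_baseMatching :
    arcSum n (baseMatching n) = ∑ t ∈ range n, arcClass n (baseMatching n) (2 * t + 1) := by
  rw [arcSum, sum_Icc_one_two_mul]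
  refine sum_congr rfl fun t ht => ?_
  rw [mem_range] at ht
  rw [arcClass_eq_zero (x := 2 * t + 2) (by unfold baseMatching; split_ifs <;> omega), add_zero]

end Invariance

/-- The sum over all arcs `e` of a non-crossing matching `a` of the classes
`[(a,e)]` in `M/N` equals `[(1,2)] + [(3,4)] + ⋯ + [(2n-1,2n)]`, independent of `a`.
Here `c t` is any representative with outermost distinguished arc `{2t+1, 2t+2}`. -/
theorem stmt10 (n : ℕ) (a : ℕ → ℕ) (ha : IsMatching n a) (hnc : NonCrossing a)
    (c : ℕ → Idx n) (hc : ∀ t < n, (c t).1.2 = (2 * t + 1, 2 * t + 2)) :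
    ∑ i ∈ ((Finset.Icc 1 (2 * n)).filter (fun i => i < a i)).attach,
        Submodule.Quotient.mk (p := NSub n)
          (Finsupp.single
            (⟨(a, i.1, a i.1), ha, hnc, (Finset.mem_filter.mp i.2).2, rfl⟩ : Idx n)
            (1 : ℤ)) =
      ∑ t ∈ Finset.range n,
        Submodule.Quotient.mk (p := NSub n) (Finsupp.single (c t) (1 : ℤ)) := by
  calc _ = arcSum n a := by
          rw [arcSum, ← sum_filter_of_ne (p := fun i => i < a i)
              fun x _ hx => not_not.1 (mt arcClass_eq_zero hx),
            ← sum_attach (Icc 1 (2 * n) |>.filter _)]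
          exact sum_congr rfl fun i _ => (arcClass_eq_mk ha hnc (mem_filter.1 i.2).2 rfl).symm
    _ = arcSum n (baseMatching n) := arcSum_eq_arcSum_baseMatching ha hnc
    _ = ∑ t ∈ range n, arcClass n (baseMatching n) (2 * t + 1) := arcSum_baseMatching
    _ = _ := sum_congr rfl fun t ht => by
          have hct := hc t (mem_range.1 ht)
          have hu := (c t).2.2.2.2
          rw [hct] at hu
          rw [← arcClass_eq_arcClass_baseMatching (c t).2.1 (c t).2.2.1 (by omega) hu,
            ← arcClass_idx, hct]
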